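/- Let α, β > −1 be reals, let n, r be integers with 0 ≤ r ≤ n, and let f : [0,1] → ℝ be r times continuously differentiable. Then ‖ (M_n^{(α,β)} f)^{(r)} ‖ ≤ (Γ(n+1)Γ(n+α+β+2)/(Γ(n−r+1)Γ(n+α+β+r+2))) · ‖f^{(r)}‖. -/

import Mathlib

/-- Bernstein basis polynomial `p_{n,k}(x) = C(n,k) x^k (1-x)^{n-k}`. -/
noncomputable def bern (n k : ℕ) (x : ℝ) : ℝ :=
  (n.choose k : ℝ) * x ^ k * (1 - x) ^ (n - k)

/-- Durrmeyer operator with Jacobi weight `t^α (1-t)^β`: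
`M_n^{(α,β)}(f;x) = Σ_{k=0}^n p_{n,k}(x) (1/c_{n,k}^{(α,β)}) ∫₀¹ p_{n,k}(t) t^α (1-t)^β f(t) dt`. -/
noncomputable def durrmeyerJ (α β : ℝ) (n : ℕ) (f : ℝ → ℝ) (x : ℝ) : ℝ :=
  ∑ k ∈ Finset.range (n + 1), bern n k x *
    ((∫ t in (0:ℝ)..1, bern n k t * t ^ α * (1 - t) ^ β * f t) /
      (∫ t in (0:ℝ)..1, bern n k t * t ^ α * (1 - t) ^ β))

/-- Supremum norm on `[0,1]`. -/
noncomputable def supNorm (g : ℝ → ℝ) : ℝ :=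
  ⨆ x : Set.Icc (0:ℝ) 1, |g x|

/-
Writing `p_{n,k}(t) t^α (1-t)^β = C(n,k) t^(α+k) (1-t)^(β+n-k)`, the `k`-th coefficient `A_k` of
`M_n^{(α,β)} f` is the mean of `f` against the Jacobi weight with exponents `(α+k, β+n-k)`.
Differentiating the Bernstein basis gives
`(M_{n+1}^{(α,β)} g)' = (n+1) Σ_k p_{n,k} (A_{k+1} - A_k)`, and one integration by parts, together
with the recurrences of the Beta integrals, shows that `A_{k+1} - A_k` is the mean of `g'` with
exponents `(α+k+1, β+n-k+1)` divided by `n+α+β+3`. Hence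
`(M_{n+1}^{(α,β)} g)' = (n+1)/(n+α+β+3) · M_n^{(α+1,β+1)} g'`; iterating `r` times produces the
Gamma ratio times `M_{n-r}^{(α+r,β+r)} f^{(r)}`, and every `M` is a positive operator reproducing
constants, hence a contraction for the sup norm.
-/

open Set MeasureTheory

section Bernstein

variable {n k : ℕ} {x : ℝ}

lemma bern_eq_eval (n k : ℕ) : bern n k = fun x => (bernsteinPolynomial ℝ n k).eval x := by
  ext x
  simp [bern, bernsteinPolynomial]

lemma bern_nonneg (hx : x ∈ Icc (0:ℝ) 1) : 0 ≤ bern n k x := by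
  have := hx.1
  have : 0 ≤ 1 - x := sub_nonneg.2 hx.2
  unfold bern
  positivity

lemma bern_succ_self (n : ℕ) (x : ℝ) : bern n (n + 1) x = 0 := by
  simp [bern, Nat.choose_succ_self]

lemma sum_bern (n : ℕ) (x : ℝ) : ∑ k ∈ Finset.range (n + 1), bern n k x = 1 := by
  simpa [bern_eq_eval, Polynomial.eval_finsetSum] using
    congrArg (Polynomial.eval x) (bernsteinPolynomial.sum ℝ n)

lemma abs_sum_bern_mul_le (hx : x ∈ Icc (0:ℝ) 1) {c : ℕ → ℝ} {M : ℝ}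
    (hc : ∀ k ≤ n, |c k| ≤ M) : |∑ k ∈ Finset.range (n + 1), bern n k x * c k| ≤ M := by
  calc |∑ k ∈ Finset.range (n + 1), bern n k x * c k|
      ≤ ∑ k ∈ Finset.range (n + 1), bern n k x * M := by
        refine (Finset.abs_sum_le_sum_abs _ _).trans (Finset.sum_le_sum fun k hk => ?_)
        rw [abs_mul, abs_of_nonneg (bern_nonneg hx)]
        exact mul_le_mul_of_nonneg_left (hc k (Finset.mem_range_succ_iff.1 hk)) (bern_nonneg hx)
    _ = M := by rw [← Finset.sum_mul, sum_bern, one_mul]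

lemma hasDerivAt_bern_succ_succ (n k : ℕ) (x : ℝ) :
    HasDerivAt (bern (n + 1) (k + 1)) ((n + 1) * (bern n k x - bern n (k + 1) x)) x := by
  simpa [bern_eq_eval, bernsteinPolynomial.derivative_succ_aux] using
    (bernsteinPolynomial ℝ (n + 1) (k + 1)).hasDerivAt x

lemma hasDerivAt_bern_succ_zero (n : ℕ) (x : ℝ) :
    HasDerivAt (bern (n + 1) 0) (-(n + 1) * bern n 0 x) x := by
  simpa [bern_eq_eval, bernsteinPolynomial.derivative_zero] using
    (bernsteinPolynomial ℝ (n + 1) 0).hasDerivAt x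

lemma hasDerivAt_sum_bern_mul (n : ℕ) (c : ℕ → ℝ) (x : ℝ) :
    HasDerivAt (fun y => ∑ k ∈ Finset.range (n + 2), bern (n + 1) k y * c k)
      ((n + 1) * ∑ k ∈ Finset.range (n + 1), bern n k x * (c (k + 1) - c k)) x := by
  simp_rw [Finset.sum_range_succ' _ (n + 1)]
  have hderiv := (HasDerivAt.fun_sum (u := Finset.range (n + 1)) fun k _ =>
    (hasDerivAt_bern_succ_succ n k x).mul_const (c (k + 1))).add
    ((hasDerivAt_bern_succ_zero n x).mul_const (c 0))
  refine hderiv.congr_deriv ?_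
  have hshift : ∑ k ∈ Finset.range (n + 1), bern n k x * c k
      = ∑ k ∈ Finset.range (n + 1), bern n (k + 1) x * c (k + 1) + bern n 0 x * c 0 := by
    rw [← Finset.sum_range_succ' (fun k => bern n k x * c k), Finset.sum_range_succ _ (n + 1),
      bern_succ_self, zero_mul, add_zero]
  simp only [mul_sub, sub_mul, Finset.sum_sub_distrib, hshift, mul_assoc, ← Finset.mul_sum]
  ring

end Bernstein

lemma abs_le_supNorm {g : ℝ → ℝ} (hg : ContinuousOn g (Icc 0 1)) {t : ℝ} (ht : t ∈ Icc (0:ℝ) 1) :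
    |g t| ≤ supNorm g := by
  obtain ⟨M, hM⟩ := isCompact_Icc.exists_bound_of_continuousOn hg
  exact le_ciSup (f := fun x : Icc (0:ℝ) 1 => |g x|)
    ⟨M, by rintro _ ⟨x, rfl⟩; exact hM x x.2⟩ ⟨t, ht⟩

section Jacobi

variable {a b : ℝ} {g g' : ℝ → ℝ}

noncomputable def jacobiIntegral (a b : ℝ) (g : ℝ → ℝ) : ℝ :=
  ∫ t in (0:ℝ)..1, t ^ a * (1 - t) ^ b * g t

noncomputable def jacobiMean (a b : ℝ) (g : ℝ → ℝ) : ℝ :=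
  jacobiIntegral a b g / jacobiIntegral a b 1

lemma intervalIntegrable_jacobi_mul (ha : -1 < a) (hb : -1 < b)
    (hg : ContinuousOn g (Icc 0 1)) :
    IntervalIntegrable (fun t => t ^ a * (1 - t) ^ b * g t) volume 0 1 := by
  have hg₁ : ContinuousOn g (uIcc 0 (1 / 2)) :=
    hg.mono (by rw [uIcc_of_le (by norm_num)]; exact Icc_subset_Icc_right (by norm_num))
  have hg₂ : ContinuousOn g (uIcc (1 / 2) 1) :=
    hg.mono (by rw [uIcc_of_le (by norm_num)]; exact Icc_subset_Icc_left (by norm_num))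
  refine IntervalIntegrable.trans (b := 1 / 2) ?_ ?_
  · have hcont : ContinuousOn (fun t : ℝ => (1 - t) ^ b * g t) (uIcc 0 (1 / 2)) := by
      refine ContinuousOn.mul (fun t ht => ?_) hg₁
      rw [uIcc_of_le (by norm_num)] at ht
      exact ((continuousAt_const.sub continuousAt_id).rpow_const
        (Or.inl (by norm_num; linarith [ht.2]))).continuousWithinAt
    simpa only [mul_assoc] using
      (intervalIntegral.intervalIntegrable_rpow' ha).mul_continuousOn hcont
  · have hcont : ContinuousOn (fun t : ℝ => t ^ a * g t) (uIcc (1 / 2) 1) := by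
      refine ContinuousOn.mul (fun t ht => ?_) hg₂
      rw [uIcc_of_le (by norm_num)] at ht
      exact (Real.continuousAt_rpow_const _ _ (Or.inl (by linarith [ht.1]))).continuousWithinAt
    have hint : IntervalIntegrable (fun t : ℝ => (1 - t) ^ b) volume (1 / 2) 1 := by
      have := ((intervalIntegral.intervalIntegrable_rpow' hb (a := 0) (b := 1 / 2)).comp_sub_left
        1).symm
      norm_num at this ⊢
      exact this
    convert hint.continuousOn_mul hcont using 1
    ext t
    ring

lemma intervalIntegrable_jacobi (ha : -1 < a) (hb : -1 < b) :
    IntervalIntegrable (fun t => t ^ a * (1 - t) ^ b) volume 0 1 := by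
  simpa using intervalIntegrable_jacobi_mul ha hb (g := 1) continuousOn_const

lemma jacobiIntegral_one_pos (ha : -1 < a) (hb : -1 < b) : 0 < jacobiIntegral a b 1 := by
  simp only [jacobiIntegral, Pi.one_apply, mul_one]
  refine intervalIntegral.intervalIntegral_pos_of_pos_on (intervalIntegrable_jacobi ha hb)
    (fun t ht => ?_) zero_lt_one
  have := sub_pos.2 ht.2
  have := ht.1
  positivity

lemma abs_jacobiMean_le (ha : -1 < a) (hb : -1 < b) (hg : ContinuousOn g (Icc 0 1)) :
    |jacobiMean a b g| ≤ supNorm g := by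
  have hW := jacobiIntegral_one_pos ha hb
  rw [jacobiMean, abs_div, abs_of_pos hW, div_le_iff₀ hW]
  calc |jacobiIntegral a b g|
      ≤ ∫ t in (0:ℝ)..1, t ^ a * (1 - t) ^ b * supNorm g := by
        rw [jacobiIntegral, ← Real.norm_eq_abs]
        refine intervalIntegral.norm_integral_le_of_norm_le zero_le_one
          (Filter.Eventually.of_forall fun t ht => ?_)
          ((intervalIntegrable_jacobi ha hb).mul_const _)
        have := sub_nonneg.2 ht.2
        have := ht.1.le
        rw [Real.norm_eq_abs, abs_mul, abs_of_nonneg (by positivity)]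
        exact mul_le_mul_of_nonneg_left (abs_le_supNorm hg (Ioc_subset_Icc_self ht)) (by positivity)
    _ = supNorm g * jacobiIntegral a b 1 := by
        simp [jacobiIntegral, mul_comm]

lemma jacobiIntegral_deriv_eq (ha : -1 < a) (hb : -1 < b) (hg : ContinuousOn g (Icc 0 1))
    (hg' : ContinuousOn g' (Icc 0 1)) (hderiv : ∀ t ∈ Ioo 0 1, HasDerivAt g (g' t) t) :
    jacobiIntegral (a + 1) (b + 1) g'
      = (b + 1) * jacobiIntegral (a + 1) b g - (a + 1) * jacobiIntegral a (b + 1) g := by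
  set u : ℝ → ℝ := fun t => t ^ (a + 1) * (1 - t) ^ (b + 1)
  set u' : ℝ → ℝ := fun t =>
    (a + 1) * (t ^ a * (1 - t) ^ (b + 1)) - (b + 1) * (t ^ (a + 1) * (1 - t) ^ b)
  have hu : ContinuousOn u (uIcc 0 1) :=
    ((Real.continuous_rpow_const (by linarith)).mul
      ((Real.continuous_rpow_const (by linarith)).comp
        (continuous_const.sub continuous_id))).continuousOn
  have hu' : ∀ t ∈ Ioo (min 0 1) (max 0 1), HasDerivAt u (u' t) t := by
    intro t ht
    simp only [zero_le_one, min_eq_left, max_eq_right] at ht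
    have h1 := Real.hasDerivAt_rpow_const (p := a + 1) (Or.inl ht.1.ne')
    have h2 := (Real.hasDerivAt_rpow_const (p := b + 1) (Or.inl (sub_pos.2 ht.2).ne')).comp t
      ((hasDerivAt_id t).const_sub 1)
    refine (h1.mul h2).congr_deriv ?_
    simp only [add_sub_cancel_right, Function.comp_apply, u']
    ring
  have hu'int : IntervalIntegrable u' volume 0 1 :=
    ((intervalIntegrable_jacobi ha (by linarith)).const_mul _).sub
      ((intervalIntegrable_jacobi (by linarith) hb).const_mul _)
  have hibp := intervalIntegral.integral_mul_deriv_eq_deriv_mul_of_hasDerivAt hu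
    (hg.mono (uIcc_of_le zero_le_one).subset) hu'
    (by simpa only [zero_le_one, min_eq_left, max_eq_right] using hderiv) hu'int
    (hg'.mono (uIcc_of_le zero_le_one).subset).intervalIntegrable
  have hu0 : u 0 = 0 := by simp [u, Real.zero_rpow (by linarith : a + 1 ≠ 0)]
  have hu1 : u 1 = 0 := by simp [u, Real.zero_rpow (by linarith : b + 1 ≠ 0)]
  have hsplit : ∫ t in (0:ℝ)..1, u' t * g t
      = (a + 1) * jacobiIntegral a (b + 1) g - (b + 1) * jacobiIntegral (a + 1) b g := by
    rw [jacobiIntegral, jacobiIntegral, ← intervalIntegral.integral_const_mul,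
      ← intervalIntegral.integral_const_mul, ← intervalIntegral.integral_sub
        ((intervalIntegrable_jacobi_mul ha (by linarith) hg).const_mul _)
        ((intervalIntegrable_jacobi_mul (by linarith) hb hg).const_mul _)]
    congr 1
    ext t
    ring
  change ∫ t in (0:ℝ)..1, u t * g' t = _
  rw [hibp, hu0, hu1, hsplit]
  ring

lemma jacobiIntegral_one_succ_left (ha : -1 < a) (hb : -1 < b) :
    (b + 1) * jacobiIntegral (a + 1) b 1 = (a + 1) * jacobiIntegral a (b + 1) 1 := by
  have h := jacobiIntegral_deriv_eq (g := 1) (g' := 0) ha hb continuousOn_const continuousOn_const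
    fun t _ => hasDerivAt_const t 1
  have h0 : jacobiIntegral (a + 1) (b + 1) 0 = 0 := by simp [jacobiIntegral]
  linarith

lemma jacobiIntegral_one_eq_add (ha : -1 < a) (hb : -1 < b) :
    jacobiIntegral a b 1 = jacobiIntegral (a + 1) b 1 + jacobiIntegral a (b + 1) 1 := by
  simp only [jacobiIntegral, Pi.one_apply, mul_one]
  rw [← intervalIntegral.integral_add (intervalIntegrable_jacobi (by linarith) hb)
    (intervalIntegrable_jacobi ha (by linarith))]
  refine intervalIntegral.integral_congr_Ioo_of_le zero_le_one fun t ht => ?_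
  simp only [Real.rpow_add_one ht.1.ne', Real.rpow_add_one (sub_pos.2 ht.2).ne']
  ring

lemma jacobiIntegral_one_succ_succ (ha : -1 < a) (hb : -1 < b) :
    (a + b + 3) * jacobiIntegral (a + 1) (b + 1) 1 = (b + 1) * jacobiIntegral (a + 1) b 1 := by
  have hsplit := jacobiIntegral_one_eq_add (a := a + 1) (by linarith) hb
  have hswap := jacobiIntegral_one_succ_left (a := a + 1) (by linarith) hb
  linear_combination (-(b + 1)) * hsplit - hswap

theorem jacobiMean_succ_left_sub_succ_right (ha : -1 < a) (hb : -1 < b)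
    (hg : ContinuousOn g (Icc 0 1)) (hg' : ContinuousOn g' (Icc 0 1))
    (hderiv : ∀ t ∈ Ioo 0 1, HasDerivAt g (g' t) t) :
    jacobiMean (a + 1) b g - jacobiMean a (b + 1) g
      = jacobiMean (a + 1) (b + 1) g' / (a + b + 3) := by
  have hP := jacobiIntegral_one_pos (a := a + 1) (by linarith) hb
  have hQ := jacobiIntegral_one_pos (b := b + 1) ha (by linarith)
  have hR := jacobiIntegral_one_pos (a := a + 1) (b := b + 1) (by linarith) (by linarith)
  have hPR := jacobiIntegral_one_succ_succ ha hb
  have hPQ := jacobiIntegral_one_succ_left ha hb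
  rw [jacobiMean, jacobiMean, jacobiMean, jacobiIntegral_deriv_eq ha hb hg hg' hderiv,
    div_sub_div _ _ hP.ne' hQ.ne', div_div, div_eq_div_iff (by positivity) (by nlinarith)]
  linear_combination (jacobiIntegral (a + 1) b g * jacobiIntegral a (b + 1) 1
    - jacobiIntegral (a + 1) b 1 * jacobiIntegral a (b + 1) g) * hPR
    - (jacobiIntegral (a + 1) b 1 * jacobiIntegral a (b + 1) g) * hPQ

end Jacobi

section Durrmeyer

variable {a b : ℝ} {n : ℕ} {g g' : ℝ → ℝ} {x : ℝ}

lemma bern_mul_rpow_mul_rpow (n k : ℕ) {t : ℝ} (ht : t ∈ Ioo (0:ℝ) 1) :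
    bern n k t * t ^ a * (1 - t) ^ b
      = n.choose k * (t ^ (a + k) * (1 - t) ^ (b + (n - k : ℕ))) := by
  rw [bern, Real.rpow_add ht.1, Real.rpow_add (sub_pos.2 ht.2), Real.rpow_natCast,
    Real.rpow_natCast]
  ring

lemma durrmeyerJ_eq_sum_jacobiMean (a b : ℝ) (n : ℕ) (f : ℝ → ℝ) (x : ℝ) :
    durrmeyerJ a b n f x
      = ∑ k ∈ Finset.range (n + 1), bern n k x * jacobiMean (a + k) (b + (n - k : ℕ)) f := by
  refine Finset.sum_congr rfl fun k hk => ?_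
  have hchoose : (n.choose k : ℝ) ≠ 0 := by
    exact_mod_cast (Nat.choose_pos (Finset.mem_range_succ_iff.1 hk)).ne'
  have hmoment : ∀ h : ℝ → ℝ, ∫ t in (0:ℝ)..1, bern n k t * t ^ a * (1 - t) ^ b * h t
      = n.choose k * jacobiIntegral (a + k) (b + (n - k : ℕ)) h := by
    intro h
    rw [jacobiIntegral, ← intervalIntegral.integral_const_mul]
    refine intervalIntegral.integral_congr_Ioo_of_le zero_le_one fun t ht => ?_
    simp only [bern_mul_rpow_mul_rpow n k ht]
    ring
  simpa only [Pi.one_apply, mul_one, jacobiMean, mul_div_mul_left _ _ hchoose]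
    using congrArg₂ (fun u v => bern n k x * (u / v)) (hmoment f) (hmoment 1)

lemma abs_durrmeyerJ_le (ha : -1 < a) (hb : -1 < b) (hg : ContinuousOn g (Icc 0 1))
    (hx : x ∈ Icc (0:ℝ) 1) : |durrmeyerJ a b n g x| ≤ supNorm g := by
  rw [durrmeyerJ_eq_sum_jacobiMean]
  exact abs_sum_bern_mul_le hx fun k _ => abs_jacobiMean_le
    (by linarith [k.cast_nonneg (α := ℝ)]) (by linarith [(n - k).cast_nonneg (α := ℝ)]) hg

theorem hasDerivAt_durrmeyerJ (ha : -1 < a) (hb : -1 < b) (hg : ContinuousOn g (Icc 0 1))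
    (hg' : ContinuousOn g' (Icc 0 1)) (hderiv : ∀ t ∈ Ioo 0 1, HasDerivAt g (g' t) t)
    (n : ℕ) (x : ℝ) :
    HasDerivAt (durrmeyerJ a b (n + 1) g)
      ((n + 1) / (n + a + b + 3) * durrmeyerJ (a + 1) (b + 1) n g' x) x := by
  rw [funext (durrmeyerJ_eq_sum_jacobiMean a b (n + 1) g)]
  refine (hasDerivAt_sum_bern_mul n _ x).congr_deriv ?_
  rw [durrmeyerJ_eq_sum_jacobiMean, Finset.mul_sum, Finset.mul_sum]
  refine Finset.sum_congr rfl fun k hk => ?_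
  have hk : k ≤ n := Finset.mem_range_succ_iff.1 hk
  have hnk : ((n - k : ℕ) : ℝ) = n - k := Nat.cast_sub hk
  have hstep := jacobiMean_succ_left_sub_succ_right (a := a + k) (b := b + (n - k : ℕ))
    (by linarith [k.cast_nonneg (α := ℝ)]) (by linarith [(n - k).cast_nonneg (α := ℝ)])
    hg hg' hderiv
  rw [show n + 1 - (k + 1) = n - k by omega, show n + 1 - k = n - k + 1 by omega]
  push_cast at hstep ⊢
  rw [← add_assoc a, ← add_assoc b, hstep, add_right_comm a, add_right_comm b,
    show a + k + (b + (n - k : ℕ)) + 3 = (n : ℝ) + a + b + 3 by rw [hnk]; ring]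
  ring

end Durrmeyer

section Factor

variable {a b : ℝ} {n r : ℕ}

noncomputable def durrmeyerJFactor (a b : ℝ) (n r : ℕ) : ℝ :=
  Real.Gamma ((n : ℝ) + 1) * Real.Gamma ((n : ℝ) + a + b + 2) /
    (Real.Gamma ((n : ℝ) - (r : ℝ) + 1) * Real.Gamma ((n : ℝ) + a + b + (r : ℝ) + 2))

lemma durrmeyerJFactor_zero (hab : -2 < a + b) : durrmeyerJFactor a b n 0 = 1 := by
  have h₁ := Real.Gamma_pos_of_pos (by positivity : (0:ℝ) < n + 1)
  have h₂ := Real.Gamma_pos_of_pos (by linarith [n.cast_nonneg (α := ℝ)] : (0:ℝ) < n + a + b + 2)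
  simp only [durrmeyerJFactor, Nat.cast_zero, sub_zero, add_zero]
  exact div_self (by positivity)

lemma durrmeyerJFactor_succ (hab : -2 < a + b) (hr : r < n) :
    durrmeyerJFactor a b n (r + 1)
      = durrmeyerJFactor a b n r * ((n - r) / (n + a + b + r + 2)) := by
  have hnr : (0:ℝ) < n - r := sub_pos.2 (by exact_mod_cast hr)
  have hs : (0:ℝ) < n + a + b + r + 2 := by linarith [r.cast_nonneg (α := ℝ)]
  have h₁ := Real.Gamma_pos_of_pos hnr
  have h₂ := Real.Gamma_pos_of_pos hs
  have h₃ := Real.Gamma_pos_of_pos (by positivity : (0:ℝ) < n + 1)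
  have h₄ := Real.Gamma_pos_of_pos (by linarith [n.cast_nonneg (α := ℝ)] : (0:ℝ) < n + a + b + 2)
  simp only [durrmeyerJFactor, Nat.cast_succ]
  rw [show (n : ℝ) - (r + 1) + 1 = n - r by ring, Real.Gamma_add_one hnr.ne',
    show (n : ℝ) + a + b + (r + 1) + 2 = (n + a + b + r + 2) + 1 by ring, Real.Gamma_add_one hs.ne']
  field_simp

lemma durrmeyerJFactor_nonneg (hab : -2 < a + b) (hr : r ≤ n) : 0 ≤ durrmeyerJFactor a b n r := by
  have hnr : (0:ℝ) < n - r + 1 := by linarith [(Nat.cast_le (α := ℝ)).2 hr]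
  have h₁ := Real.Gamma_pos_of_pos hnr
  have h₂ := Real.Gamma_pos_of_pos (by linarith [r.cast_nonneg (α := ℝ), n.cast_nonneg (α := ℝ)] :
    (0:ℝ) < n + a + b + r + 2)
  have h₃ := Real.Gamma_pos_of_pos (by positivity : (0:ℝ) < n + 1)
  have h₄ := Real.Gamma_pos_of_pos (by linarith [n.cast_nonneg (α := ℝ)] : (0:ℝ) < n + a + b + 2)
  unfold durrmeyerJFactor
  positivity

end Factor

theorem iteratedDeriv_durrmeyerJ {a b : ℝ} (ha : -1 < a) (hb : -1 < b) {n r : ℕ} (hr : r ≤ n)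
    {f : ℝ → ℝ} (hf : ContDiff ℝ r f) :
    iteratedDeriv r (durrmeyerJ a b n f)
      = fun x =>
        durrmeyerJFactor a b n r * durrmeyerJ (a + r) (b + r) (n - r) (iteratedDeriv r f) x := by
  induction r with
  | zero =>
    ext x
    simp [durrmeyerJFactor_zero (by linarith : -2 < a + b)]
  | succ r ih =>
    obtain ⟨m, hm⟩ : ∃ m, n - r = m + 1 := ⟨n - r - 1, by omega⟩
    have hmR : (m : ℝ) + 1 = n - r := by
      rw [← Nat.cast_add_one, ← hm, Nat.cast_sub (by omega)]
    have hderiv : ∀ t, HasDerivAt (iteratedDeriv r f) (iteratedDeriv (r + 1) f t) t := fun t => by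
      rw [iteratedDeriv_succ]
      exact (hf.differentiable_iteratedDeriv r (by exact_mod_cast r.lt_succ_self) t).hasDerivAt
    ext x
    have hD := (hasDerivAt_durrmeyerJ (a := a + r) (b := b + r)
      (by linarith [r.cast_nonneg (α := ℝ)]) (by linarith [r.cast_nonneg (α := ℝ)])
      (hf.continuous_iteratedDeriv r (by exact_mod_cast r.le_succ)).continuousOn
      (hf.continuous_iteratedDeriv (r + 1) le_rfl).continuousOn (fun t _ => hderiv t) m x).const_mul
      (durrmeyerJFactor a b n r)
    rw [iteratedDeriv_succ, ih (by omega) (hf.of_le (by exact_mod_cast r.le_succ)), hm, hD.deriv,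
      durrmeyerJFactor_succ (by linarith) (by omega), show n - (r + 1) = m by omega, hmR,
      show (m : ℝ) + (a + r) + (b + r) + 3 = n + a + b + r + 2 by linarith, Nat.cast_succ,
      ← add_assoc a, ← add_assoc b, mul_assoc]

theorem durrmeyerJ_derivative_bound
    (α β : ℝ) (hα : -1 < α) (hβ : -1 < β)
    (n r : ℕ) (hr : r ≤ n)
    (f : ℝ → ℝ) (hf : ContDiff ℝ r f) :
    ∀ x ∈ Set.Icc (0:ℝ) 1,
      |iteratedDeriv r (durrmeyerJ α β n f) x| ≤
        Real.Gamma ((n : ℝ) + 1) * Real.Gamma ((n : ℝ) + α + β + 2) /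
            (Real.Gamma ((n : ℝ) - (r : ℝ) + 1) * Real.Gamma ((n : ℝ) + α + β + (r : ℝ) + 2)) *
          supNorm (iteratedDeriv r f) := by
  intro x hx
  have hfactor := durrmeyerJFactor_nonneg (by linarith : -2 < α + β) hr
  rw [iteratedDeriv_durrmeyerJ hα hβ hr hf, abs_mul, abs_of_nonneg hfactor]
  have hr' : (0:ℝ) ≤ r := r.cast_nonneg
  exact mul_le_mul_of_nonneg_left (abs_durrmeyerJ_le (by linarith) (by linarith)
    (hf.continuous_iteratedDeriv r le_rfl).continuousOn hx) hfactor
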